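/- arXiv:1902.10927 — 3 statements merged into one kernel-verified Lean document; each statement's English description precedes it below -/
import Mathlib

section
/- In a Banach lattice f-algebra E with multiplicative unit e, a net (x_α) is mn-convergent to x if and only if (x_α y) is mn-convergent to xy for every y ∈ E. -/
open Filter

class BanachLatticeFAlgebra (E : Type*) extends NonUnitalNormedRing E, Lattice E where
  add_le_add_left : ∀ a b : E, a ≤ b → ∀ c : E, c + a ≤ c + b
  mul_nonneg : ∀ a b : E, 0 ≤ a → 0 ≤ b → 0 ≤ a * b
  inf_mul_right : ∀ a b c : E, 0 ≤ c → a ⊓ b = 0 → (a * c) ⊓ b = 0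
  inf_mul_left : ∀ a b c : E, 0 ≤ c → a ⊓ b = 0 → (c * a) ⊓ b = 0
  archimedean : ∀ a b : E, 0 ≤ a → (∀ n : ℕ, n • a ≤ b) → a ≤ 0
  solid_norm : ∀ a b : E, a ⊔ -a ≤ b ⊔ -b → ‖a‖ ≤ ‖b‖

/-- The lattice absolute value `|x| = x ⊔ (-x)`. -/
def latAbs {E : Type*} [BanachLatticeFAlgebra E] (x : E) : E := x ⊔ -x

/-- A net `x` is multiplicative norm (mn-) convergent to `x₀` along the filter `l`
if `‖|x i - x₀| u‖ → 0` for every positive `u`. -/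
def MnTendsto {E : Type*} [BanachLatticeFAlgebra E] {ι : Type*} (l : Filter ι)
    (x : ι → E) (x₀ : E) : Prop :=
  ∀ u : E, 0 ≤ u → Tendsto (fun i => ‖latAbs (x i - x₀) * u‖) l (nhds 0)

section Aux

variable {E : Type*} [BanachLatticeFAlgebra E]

instance (priority := 100) BLFA.addLeftMono : CovariantClass E E (· + ·) (· ≤ ·) :=
  ⟨fun c a b h => BanachLatticeFAlgebra.add_le_add_left a b h c⟩

lemma latAbs_eq_abs (x : E) : latAbs x = |x| := rfl

lemma latAbs_nonneg (x : E) : 0 ≤ latAbs x := by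
  rw [latAbs_eq_abs]; exact abs_nonneg x

lemma latAbs_mul_le (a b : E) : latAbs (a * b) ≤ latAbs a * latAbs b := by
  simp only [latAbs_eq_abs]
  have hmul := BanachLatticeFAlgebra.mul_nonneg (E := E)
  have hsplit : a * b = a⁺ * b⁺ - a⁺ * b⁻ - a⁻ * b⁺ + a⁻ * b⁻ := by
    have ha := posPart_sub_negPart a
    have hb := posPart_sub_negPart b
    calc a * b = (a⁺ - a⁻) * (b⁺ - b⁻) := by rw [ha, hb]
    _ = a⁺ * b⁺ - a⁺ * b⁻ - a⁻ * b⁺ + a⁻ * b⁻ := by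
        simp only [sub_mul, mul_sub]; abel
  have habs : |a| * |b| = a⁺ * b⁺ + a⁺ * b⁻ + a⁻ * b⁺ + a⁻ * b⁻ := by
    rw [← posPart_add_negPart a, ← posPart_add_negPart b]
    simp only [add_mul, mul_add]; abel
  have h1 : (0:E) ≤ a⁺ * b⁺ := hmul _ _ (posPart_nonneg a) (posPart_nonneg b)
  have h2 : (0:E) ≤ a⁺ * b⁻ := hmul _ _ (posPart_nonneg a) (negPart_nonneg b)
  have h3 : (0:E) ≤ a⁻ * b⁺ := hmul _ _ (negPart_nonneg a) (posPart_nonneg b)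
  have h4 : (0:E) ≤ a⁻ * b⁻ := hmul _ _ (negPart_nonneg a) (negPart_nonneg b)
  show a * b ⊔ -(a * b) ≤ |a| * |b|
  apply sup_le
  swap
  · rw [hsplit, habs]
    have : -(a⁺ * b⁺ - a⁺ * b⁻ - a⁻ * b⁺ + a⁻ * b⁻) =
        -(a⁺ * b⁺) + a⁺ * b⁻ + a⁻ * b⁺ - a⁻ * b⁻ := by abel
    rw [this]
    have l1 : -(a⁺ * b⁺) ≤ a⁺ * b⁺ := le_trans (neg_nonpos.2 h1) h1
    calc -(a⁺ * b⁺) + a⁺ * b⁻ + a⁻ * b⁺ - a⁻ * b⁻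
        ≤ a⁺ * b⁺ + a⁺ * b⁻ + a⁻ * b⁺ - a⁻ * b⁻ := by
          gcongr
      _ ≤ a⁺ * b⁺ + a⁺ * b⁻ + a⁻ * b⁺ + a⁻ * b⁻ := by
          have : -(a⁻ * b⁻) ≤ a⁻ * b⁻ := le_trans (neg_nonpos.2 h4) h4
          simpa [sub_eq_add_neg] using add_le_add_left this (a⁺ * b⁺ + a⁺ * b⁻ + a⁻ * b⁺)
  · rw [hsplit, habs]
    have l2 : -(a⁺ * b⁻) ≤ a⁺ * b⁻ := le_trans (neg_nonpos.2 h2) h2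
    have l3 : -(a⁻ * b⁺) ≤ a⁻ * b⁺ := le_trans (neg_nonpos.2 h3) h3
    calc a⁺ * b⁺ - a⁺ * b⁻ - a⁻ * b⁺ + a⁻ * b⁻
        = a⁺ * b⁺ + (-(a⁺ * b⁻)) + (-(a⁻ * b⁺)) + a⁻ * b⁻ := by abel
      _ ≤ a⁺ * b⁺ + a⁺ * b⁻ + (-(a⁻ * b⁺)) + a⁻ * b⁻ := by gcongr
      _ ≤ a⁺ * b⁺ + a⁺ * b⁻ + a⁻ * b⁺ + a⁻ * b⁻ := by gcongr

lemma mul_le_mul_right_nn (a b c : E) (h : a ≤ b) (hc : 0 ≤ c) : a * c ≤ b * c := by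
  have : 0 ≤ (b - a) * c := BanachLatticeFAlgebra.mul_nonneg _ _ (by simpa using h) hc
  have := add_le_add_left this (a * c)
  simpa [sub_mul, add_sub_cancel] using this

end Aux

variable {E : Type*} [BanachLatticeFAlgebra E] [CompleteSpace E]
variable {A : Type*} [Preorder A] [Nonempty A] [IsDirected A (· ≤ ·)]

/-- With a multiplicative unit `e`, mn-convergence holds iff it holds after
multiplication by every `y`. -/
theorem mnTendsto_iff_forall_mul (e : E) (he : ∀ z : E, e * z = z ∧ z * e = z)
    (x : A → E) (x₀ : E) :
    MnTendsto atTop x x₀ ↔ ∀ y : E, MnTendsto atTop (fun a => x a * y) (x₀ * y) := by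
  constructor
  · intro h y u hu
    have hv : (0:E) ≤ latAbs y * u :=
      BanachLatticeFAlgebra.mul_nonneg _ _ (latAbs_nonneg y) hu
    have hb := h (latAbs y * u) hv
    apply squeeze_zero (fun a => norm_nonneg _) _ hb
    intro a
    apply BanachLatticeFAlgebra.solid_norm
    have hd : x a * y - x₀ * y = (x a - x₀) * y := (sub_mul _ _ _).symm
    have h1 : latAbs (x a * y - x₀ * y) * u ≤ latAbs (x a - x₀) * (latAbs y * u) := by
      rw [hd, ← mul_assoc]
      exact mul_le_mul_right_nn _ _ _ (latAbs_mul_le _ _) hu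
    have hn1 : (0:E) ≤ latAbs (x a * y - x₀ * y) * u :=
      BanachLatticeFAlgebra.mul_nonneg _ _ (latAbs_nonneg _) hu
    have hn2 : (0:E) ≤ latAbs (x a - x₀) * (latAbs y * u) :=
      BanachLatticeFAlgebra.mul_nonneg _ _ (latAbs_nonneg _) hv
    calc latAbs (x a * y - x₀ * y) * u ⊔ -(latAbs (x a * y - x₀ * y) * u)
        = |latAbs (x a * y - x₀ * y) * u| := rfl
      _ = latAbs (x a * y - x₀ * y) * u := abs_of_nonneg hn1
      _ ≤ latAbs (x a - x₀) * (latAbs y * u) := h1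
      _ = |latAbs (x a - x₀) * (latAbs y * u)| := (abs_of_nonneg hn2).symm
      _ = latAbs (x a - x₀) * (latAbs y * u) ⊔ -(latAbs (x a - x₀) * (latAbs y * u)) := rfl
  · intro h u hu
    have := h e u hu
    simpa [(he _).2] using this
end

section
/- Let E be a Banach lattice f-algebra with a quasi-interior point e, and let (x_α) be a decreasing net in E with x_α ≥ 0. Then (x_α) is mn-convergent to 0 if and only if ‖x_α e‖ → 0. -/
open Filter

/-!
For `u ≥ 0` split `u = (u - u ⊓ n e) + u ⊓ n e`. Since `x_α ≤ x_{α₀}`, the first part contributes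
at most `‖x_{α₀}‖ ‖u - u ⊓ n e‖`, which is small for large `n` because `e` is quasi-interior;
for this fixed `n` the second part contributes at most `n ‖x_α e‖`, which tends to `0`.
-/

theorem HasSolidNorm.norm_le_norm_of_nonneg_of_le {α : Type*} [NormedAddCommGroup α] [Lattice α]
    [HasSolidNorm α] [IsOrderedAddMonoid α] {a b : α} (ha : 0 ≤ a) (hab : a ≤ b) :
    ‖a‖ ≤ ‖b‖ :=
  norm_le_norm_of_abs_le_abs <| by rwa [abs_of_nonneg ha, abs_of_nonneg (ha.trans hab)]

theorem tendsto_zero_of_le_mul_add_nat_mul {ι : Type*} {l : Filter ι} {f g : ι → ℝ} {δ : ℕ → ℝ}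
    (C : ℝ) (hf : ∀ i, 0 ≤ f i) (hδ : Tendsto δ atTop (nhds 0)) (hg : Tendsto g l (nhds 0))
    (hle : ∀ n : ℕ, ∀ᶠ i in l, f i ≤ C * δ n + n * g i) :
    Tendsto f l (nhds 0) := by
  refine tendsto_order.2 ⟨fun a ha => .of_forall fun i => ha.trans_le (hf i), fun ε hε => ?_⟩
  have hCδ : Tendsto (fun n => C * δ n) atTop (nhds 0) := by simpa using hδ.const_mul C
  obtain ⟨n, hn⟩ := (hCδ.eventually (gt_mem_nhds (half_pos hε))).exists
  have hgn : ∀ᶠ i in l, n * g i < ε / 2 := by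
    refine (hg.const_mul (n : ℝ)).eventually (gt_mem_nhds ?_)
    simpa using half_pos hε
  filter_upwards [hle n, hgn] with i hi hgi
  linarith

namespace BanachLatticeFAlgebra

variable {E : Type*} [BanachLatticeFAlgebra E]

instance : IsOrderedAddMonoid E where
  add_le_add_left a b h c := by
    simpa only [add_comm c] using BanachLatticeFAlgebra.add_le_add_left a b h c

instance : PosMulMono E :=
  ⟨fun _ hc _ _ h => sub_nonneg.1 <| by
    simpa only [mul_sub] using mul_nonneg _ _ hc (sub_nonneg.2 h)⟩

instance : HasSolidNorm E :=
  ⟨fun a b h => solid_norm a b h⟩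

theorem latAbs_of_nonneg {a : E} (ha : 0 ≤ a) : latAbs a = a :=
  abs_of_nonneg ha

theorem norm_mul_inf_nsmul_le {x u e : E} (hx : 0 ≤ x) (hu : 0 ≤ u) (he : 0 ≤ e) (n : ℕ) :
    ‖x * (u ⊓ n • e)‖ ≤ n * ‖x * e‖ := by
  have hinf : 0 ≤ u ⊓ n • e := le_inf hu (nsmul_nonneg he n)
  calc ‖x * (u ⊓ n • e)‖ ≤ ‖n • (x * e)‖ := by
        refine HasSolidNorm.norm_le_norm_of_nonneg_of_le (mul_nonneg _ _ hx hinf) ?_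
        rw [← mul_smul_comm]
        exact mul_le_mul_of_nonneg_left inf_le_right hx
    _ ≤ n * ‖x * e‖ := norm_nsmul_le

theorem norm_mul_le_of_inf_nsmul {x u e : E} (hx : 0 ≤ x) (hu : 0 ≤ u) (he : 0 ≤ e) (n : ℕ) :
    ‖x * u‖ ≤ ‖x‖ * ‖u - u ⊓ n • e‖ + n * ‖x * e‖ :=
  calc ‖x * u‖ = ‖x * (u - u ⊓ n • e) + x * (u ⊓ n • e)‖ := by rw [← mul_add, sub_add_cancel]
    _ ≤ ‖x * (u - u ⊓ n • e)‖ + ‖x * (u ⊓ n • e)‖ := norm_add_le _ _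
    _ ≤ ‖x‖ * ‖u - u ⊓ n • e‖ + n * ‖x * e‖ :=
        add_le_add (norm_mul_le _ _) (norm_mul_inf_nsmul_le hx hu he n)

end BanachLatticeFAlgebra

open BanachLatticeFAlgebra

variable {E : Type*} [BanachLatticeFAlgebra E] [CompleteSpace E]
variable {A : Type*} [Preorder A] [Nonempty A] [IsDirected A (· ≤ ·)]

/-- For a positive decreasing net in a Banach lattice `f`-algebra with a
quasi-interior point `e`, mn-convergence to `0` is equivalent to `‖x_α e‖ → 0`. -/
theorem mnTendsto_iff_mul_quasiInterior (e : E) (he : 0 ≤ e)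
    (hq : ∀ v : E, 0 ≤ v → Tendsto (fun n : ℕ => ‖v - v ⊓ (n • e)‖) atTop (nhds 0))
    (x : A → E) (hpos : ∀ a, 0 ≤ x a) (hdec : Antitone x) :
    MnTendsto atTop x 0 ↔ Tendsto (fun a => ‖x a * e‖) atTop (nhds 0) := by
  have habs : ∀ a, latAbs (x a - 0) = x a := fun a => by
    rw [sub_zero, latAbs_of_nonneg (hpos a)]
  refine ⟨fun h => by simpa only [habs] using h e he, fun h u hu => ?_⟩
  simp only [habs]
  obtain ⟨a₀⟩ := ‹Nonempty A›
  refine tendsto_zero_of_le_mul_add_nat_mul ‖x a₀‖ (fun _ => norm_nonneg _) (hq u hu) h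
    fun n => ?_
  filter_upwards [eventually_ge_atTop a₀] with a ha
  calc ‖x a * u‖ ≤ ‖x a‖ * ‖u - u ⊓ n • e‖ + n * ‖x a * e‖ :=
        norm_mul_le_of_inf_nsmul (hpos a) hu he n
    _ ≤ ‖x a₀‖ * ‖u - u ⊓ n • e‖ + n * ‖x a * e‖ := by
        gcongr
        exact HasSolidNorm.norm_le_norm_of_nonneg_of_le (hpos a) (hdec ha)
end

section
/- Let E be a Banach lattice f-algebra in which every positive element can be written as a product of two positive elements. If x_α is mn-convergent to x and y_β is mn-convergent to y, then the product net (x_α y_β) indexed by the product directed set is mn-convergent to xy. -/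
/-!
Write `u = u₁ u₂`. Then `|xy - x₀y₀| u` is dominated by
`|x - x₀| (|y₀| u) + |x₀| (|y - y₀| u) + (|x - x₀| u₁) (|y - y₀| u₂)`, and each of the three
norms tends to zero; the last rearrangement needs that positive elements commute.

That is the Birkhoff–Pierce theorem. Modulo a prime l-ideal the order is total, and there a
Euclidean algorithm on `0 ≤ q ≤ p` shows `2 ^ K • |pq - qp| ≤ p²` for every `K`: if all
multiples of `q` stay below `p` this is immediate, and otherwise two division steps replace
`(p, q)` by `(r, s)` with the same commutator and `2r ≤ p`. Prime l-ideals separate points, so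
`2 ^ K • |ab - ba| ≤ a² + b²` holds in `E`, and the Archimedean property gives `ab = ba`.
-/

open Filter

theorem nsmul_add_mul_sub_mul {R : Type*} [NonUnitalRing R] (n : ℕ) (q r : R) :
    (n • q + r) * q - q * (n • q + r) = r * q - q * r := by
  simp only [add_mul, mul_add, smul_mul_assoc, mul_smul_comm]
  abel

section LatticeOrderedGroup

variable {α : Type*} [Lattice α] [AddCommGroup α] [IsOrderedAddMonoid α]

theorem add_inf_le_inf_add_inf {a b c : α} (ha : 0 ≤ a) (hb : 0 ≤ b) (hc : 0 ≤ c) :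
    (a + b) ⊓ c ≤ a ⊓ c + b ⊓ c := by
  rw [add_inf]
  refine le_inf ?_ (inf_le_right.trans (le_add_of_nonneg_left (le_inf ha hc)))
  calc (a + b) ⊓ c ≤ (a + b) ⊓ (c + b) := inf_le_inf_left _ (le_add_of_nonneg_right hb)
    _ = a ⊓ c + b := (inf_add a c b).symm

theorem add_inf_add_le_add_inf {a b c d : α} (ha : 0 ≤ a) (hb : 0 ≤ b) :
    (a + c) ⊓ (b + d) ≤ a + b + c ⊓ d := by
  rw [add_inf]
  exact inf_le_inf (by gcongr; exact le_add_of_nonneg_right hb)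
    (by rw [add_comm a b]; gcongr; exact le_add_of_nonneg_right ha)

theorem eq_zero_of_abs_nonpos {a : α} (h : |a| ≤ 0) : a = 0 :=
  le_antisymm ((le_abs_self a).trans h) (neg_nonpos.1 ((neg_le_abs a).trans h))

end LatticeOrderedGroup

section FAlgebra

variable {E : Type*} [BanachLatticeFAlgebra E]

instance : IsOrderedAddMonoid E where
  add_le_add_left a b h c := by
    simpa only [add_comm c] using BanachLatticeFAlgebra.add_le_add_left a b h c

instance : PosMulMono E where
  mul_le_mul_of_nonneg_left c hc a b h := by
    simpa [mul_sub] using BanachLatticeFAlgebra.mul_nonneg _ _ hc (sub_nonneg.2 h)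

instance : MulPosMono E where
  mul_le_mul_of_nonneg_right c hc a b h := by
    simpa [sub_mul] using BanachLatticeFAlgebra.mul_nonneg _ _ (sub_nonneg.2 h) hc

theorem abs_mul_le_abs_mul_abs (a b : E) : |a * b| ≤ |a| * |b| := by
  have h₁ := mul_nonneg (posPart_nonneg a) (negPart_nonneg b)
  have h₂ := mul_nonneg (negPart_nonneg a) (posPart_nonneg b)
  have h₃ := mul_nonneg (posPart_nonneg a) (posPart_nonneg b)
  have h₄ := mul_nonneg (negPart_nonneg a) (negPart_nonneg b)
  rw [← posPart_add_negPart a, ← posPart_add_negPart b]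
  conv_lhs => rw [← posPart_sub_negPart a, ← posPart_sub_negPart b]
  refine abs_le'.2 ⟨?_, ?_⟩
  · rw [← sub_nonneg]
    convert add_nonneg (add_nonneg h₁ h₁) (add_nonneg h₂ h₂) using 1
    noncomm_ring
  · rw [← sub_nonneg]
    convert add_nonneg (add_nonneg h₃ h₃) (add_nonneg h₄ h₄) using 1
    noncomm_ring

theorem norm_le_norm_of_nonneg_of_le {a b : E} (ha : 0 ≤ a) (hab : a ≤ b) : ‖a‖ ≤ ‖b‖ :=
  BanachLatticeFAlgebra.solid_norm a b <| abs_le_abs_of_nonneg ha hab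

end FAlgebra

section LIdeal

variable {E : Type*} [BanachLatticeFAlgebra E]

structure IsLIdeal (I : Set E) : Prop where
  zero_mem : 0 ∈ I
  add_mem {x y : E} : x ∈ I → y ∈ I → x + y ∈ I
  mem_of_abs_le {x y : E} : |x| ≤ |y| → y ∈ I → x ∈ I
  mul_mem_left (r : E) {x : E} : x ∈ I → r * x ∈ I
  mul_mem_right (r : E) {x : E} : x ∈ I → x * r ∈ I

structure IsPrimeLIdeal (I : Set E) : Prop extends IsLIdeal I where
  mem_or_mem {a b : E} : a ⊓ b = 0 → a ∈ I ∨ b ∈ I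

namespace IsLIdeal

variable {I : Set E}

theorem neg_mem (hI : IsLIdeal I) {x : E} (hx : x ∈ I) : -x ∈ I :=
  hI.mem_of_abs_le (abs_neg x).le hx

theorem abs_mem (hI : IsLIdeal I) {x : E} (hx : x ∈ I) : |x| ∈ I :=
  hI.mem_of_abs_le (abs_abs x).le hx

theorem sUnion {C : Set (Set E)} (hC : ∀ I ∈ C, IsLIdeal I) (hchain : IsChain (· ⊆ ·) C)
    (hne : C.Nonempty) : IsLIdeal (⋃₀ C) where
  zero_mem := by
    obtain ⟨I, hI⟩ := hne
    exact ⟨I, hI, (hC I hI).zero_mem⟩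
  add_mem := by
    rintro x y ⟨I, hI, hx⟩ ⟨J, hJ, hy⟩
    obtain ⟨K, hK, hIK, hJK⟩ := hchain.directedOn I hI J hJ
    exact ⟨K, hK, (hC K hK).add_mem (hIK hx) (hJK hy)⟩
  mem_of_abs_le := by
    rintro x y hxy ⟨I, hI, hy⟩
    exact ⟨I, hI, (hC I hI).mem_of_abs_le hxy hy⟩
  mul_mem_left := by
    rintro r x ⟨I, hI, hx⟩
    exact ⟨I, hI, (hC I hI).mul_mem_left r hx⟩
  mul_mem_right := by
    rintro r x ⟨I, hI, hx⟩
    exact ⟨I, hI, (hC I hI).mul_mem_right r hx⟩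

theorem singleton_zero : IsLIdeal ({0} : Set E) where
  zero_mem := rfl
  add_mem := by rintro x y rfl rfl; simp
  mem_of_abs_le := by
    rintro x y hxy rfl
    rw [abs_zero] at hxy
    exact eq_zero_of_abs_nonpos hxy
  mul_mem_left := by rintro r x rfl; simp
  mul_mem_right := by rintro r x rfl; simp

end IsLIdeal

end LIdeal

section PrimeLIdeal

variable {E : Type*} [BanachLatticeFAlgebra E]

/-- The positive cone of the band `{x}ᗮᗮ` generated by `x`. -/
def bandCone (x : E) : Set E := {t | 0 ≤ t ∧ ∀ v, x ⊓ v = 0 → t ⊓ v = 0}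

namespace bandCone

variable {x : E}

theorem zero_mem : (0 : E) ∈ bandCone x :=
  ⟨le_rfl, fun _ hv => inf_of_le_left (hv ▸ inf_le_right)⟩

theorem self_mem (hx : 0 ≤ x) : x ∈ bandCone x := ⟨hx, fun _ hv => hv⟩

theorem add_mem {s t : E} (hs : s ∈ bandCone x) (ht : t ∈ bandCone x) : s + t ∈ bandCone x := by
  refine ⟨add_nonneg hs.1 ht.1, fun v hv => le_antisymm ?_ (le_inf (add_nonneg hs.1 ht.1) ?_)⟩
  · have := add_inf_le_inf_add_inf hs.1 ht.1 (hv ▸ inf_le_right)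
    rwa [hs.2 v hv, ht.2 v hv, add_zero] at this
  · exact hv ▸ inf_le_right

theorem mul_mem_left {r t : E} (hr : 0 ≤ r) (ht : t ∈ bandCone x) : r * t ∈ bandCone x :=
  ⟨mul_nonneg hr ht.1, fun v hv => BanachLatticeFAlgebra.inf_mul_left t v r hr (ht.2 v hv)⟩

theorem mul_mem_right {r t : E} (hr : 0 ≤ r) (ht : t ∈ bandCone x) : t * r ∈ bandCone x :=
  ⟨mul_nonneg ht.1 hr, fun v hv => BanachLatticeFAlgebra.inf_mul_right t v r hr (ht.2 v hv)⟩

theorem inf_eq_zero {a b s t : E} (hab : a ⊓ b = 0) (hs : s ∈ bandCone a) (ht : t ∈ bandCone b) :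
    s ⊓ t = 0 :=
  hs.2 t (by rw [inf_comm]; exact ht.2 a (by rwa [inf_comm]))

end bandCone

/-- The sum `I + {x}ᗮᗮ` of `I` and the band generated by `x`. -/
def adjoinBand (I : Set E) (x : E) : Set E :=
  {z | ∃ m ∈ I, 0 ≤ m ∧ ∃ t ∈ bandCone x, |z| ≤ m + t}

namespace IsLIdeal

variable {I : Set E}

theorem subset_adjoinBand (hI : IsLIdeal I) (x : E) : I ⊆ adjoinBand I x :=
  fun z hz => ⟨|z|, hI.abs_mem hz, abs_nonneg z, 0, bandCone.zero_mem, by simp⟩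

theorem mem_adjoinBand_self (hI : IsLIdeal I) {x : E} (hx : 0 ≤ x) : x ∈ adjoinBand I x :=
  ⟨0, hI.zero_mem, le_rfl, x, bandCone.self_mem hx, by simp [abs_of_nonneg hx]⟩

theorem mem_of_mem_adjoinBand (hI : IsLIdeal I) {a b z : E} (hab : a ⊓ b = 0)
    (ha : z ∈ adjoinBand I a) (hb : z ∈ adjoinBand I b) : z ∈ I := by
  obtain ⟨m, hm, hm0, s, hs, hzs⟩ := ha
  obtain ⟨m', hm', hm0', t, ht, hzt⟩ := hb
  have hz : |z| ≤ |m + m'| := by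
    rw [abs_of_nonneg (add_nonneg hm0 hm0')]
    simpa [bandCone.inf_eq_zero hab hs ht] using
      (le_inf hzs hzt).trans (add_inf_add_le_add_inf hm0 hm0')
  exact hI.mem_of_abs_le hz (hI.add_mem hm hm')

theorem adjoinBand (hI : IsLIdeal I) (x : E) : IsLIdeal (adjoinBand I x) where
  zero_mem := ⟨0, hI.zero_mem, le_rfl, 0, bandCone.zero_mem, by simp⟩
  add_mem := by
    rintro y z ⟨m, hm, hm0, t, ht, hy⟩ ⟨m', hm', hm0', t', ht', hz⟩
    refine ⟨m + m', hI.add_mem hm hm', add_nonneg hm0 hm0', t + t', bandCone.add_mem ht ht', ?_⟩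
    calc |y + z| ≤ |y| + |z| := abs_add_le y z
      _ ≤ (m + t) + (m' + t') := add_le_add hy hz
      _ = (m + m') + (t + t') := add_add_add_comm _ _ _ _
  mem_of_abs_le := by
    rintro y z hyz ⟨m, hm, hm0, t, ht, hz⟩
    exact ⟨m, hm, hm0, t, ht, hyz.trans hz⟩
  mul_mem_left r := by
    rintro z ⟨m, hm, hm0, t, ht, hz⟩
    refine ⟨|r| * m, hI.mul_mem_left _ hm, mul_nonneg (abs_nonneg r) hm0, |r| * t,
      bandCone.mul_mem_left (abs_nonneg r) ht, ?_⟩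
    calc |r * z| ≤ |r| * |z| := abs_mul_le_abs_mul_abs r z
      _ ≤ |r| * (m + t) := mul_le_mul_of_nonneg_left hz (abs_nonneg r)
      _ = |r| * m + |r| * t := mul_add _ _ _
  mul_mem_right r := by
    rintro z ⟨m, hm, hm0, t, ht, hz⟩
    refine ⟨m * |r|, hI.mul_mem_right _ hm, mul_nonneg hm0 (abs_nonneg r), t * |r|,
      bandCone.mul_mem_right (abs_nonneg r) ht, ?_⟩
    calc |z * r| ≤ |z| * |r| := abs_mul_le_abs_mul_abs z r
      _ ≤ (m + t) * |r| := mul_le_mul_of_nonneg_right hz (abs_nonneg r)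
      _ = m * |r| + t * |r| := add_mul _ _ _

end IsLIdeal

theorem exists_isPrimeLIdeal_notMem {w : E} (hw : w ≠ 0) :
    ∃ M : Set E, IsPrimeLIdeal M ∧ w ∉ M := by
  obtain ⟨M, -, hM⟩ := zorn_subset_nonempty {I : Set E | IsLIdeal I ∧ w ∉ I}
    (fun C hC hchain hne => ⟨⋃₀ C, ⟨IsLIdeal.sUnion (fun I hI => (hC hI).1) hchain hne,
      fun ⟨I, hI, hw⟩ => (hC hI).2 hw⟩, fun _ => Set.subset_sUnion_of_mem⟩)
    {0} ⟨IsLIdeal.singleton_zero, hw⟩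
  obtain ⟨hMI, hwM⟩ := hM.prop
  refine ⟨M, ⟨hMI, fun {a b} hab => ?_⟩, hwM⟩
  by_contra! h
  have hw_mem : ∀ x, 0 ≤ x → x ∉ M → w ∈ adjoinBand M x := fun x hx hxM => by
    by_contra hw'
    exact hxM (hM.eq_of_subset ⟨hMI.adjoinBand x, hw'⟩ (hMI.subset_adjoinBand x) ▸
      hMI.mem_adjoinBand_self hx)
  exact hwM (hMI.mem_of_mem_adjoinBand hab (hw_mem a (hab ▸ inf_le_left) h.1)
    (hw_mem b (hab ▸ inf_le_right) h.2))

end PrimeLIdeal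

section LeMod

variable {E : Type*} [BanachLatticeFAlgebra E]

/-- For a prime l-ideal `M`, the order of the totally ordered quotient `E ⧸ M`. -/
def LeMod (M : Set E) (x y : E) : Prop := ∃ m ∈ M, x - y ≤ m

local notation:50 x " ≤[" M "] " y:50 => LeMod M x y

namespace LeMod

variable {M : Set E} {a b c x y z : E}

theorem of_sub_eq (h : x ≤[M] y) (e : a - b = x - y) : a ≤[M] b := by
  obtain ⟨m, hm, hxy⟩ := h
  exact ⟨m, hm, e ▸ hxy⟩

theorem of_le (hM : IsLIdeal M) (h : x ≤ y) : x ≤[M] y :=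
  ⟨0, hM.zero_mem, sub_nonpos.2 h⟩

theorem add (hM : IsLIdeal M) (h₁ : a ≤[M] b) (h₂ : x ≤[M] y) : a + x ≤[M] b + y := by
  obtain ⟨m, hm, hab⟩ := h₁
  obtain ⟨m', hm', hxy⟩ := h₂
  exact ⟨m + m', hM.add_mem hm hm', by rw [add_sub_add_comm]; exact add_le_add hab hxy⟩

theorem trans (hM : IsLIdeal M) (h₁ : x ≤[M] y) (h₂ : y ≤[M] z) : x ≤[M] z :=
  (add hM h₁ h₂).of_sub_eq (by abel)

theorem nsmul (hM : IsLIdeal M) (n : ℕ) (h : x ≤[M] y) : n • x ≤[M] n • y := by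
  induction n with
  | zero => simpa using of_le hM le_rfl
  | succ n ih => simpa only [succ_nsmul] using add hM ih h

theorem sub_le_self (hz : 0 ≤[M] z) : x - z ≤[M] x :=
  hz.of_sub_eq (by abel)

theorem le_add_self (hz : 0 ≤[M] z) : x ≤[M] x + z :=
  hz.of_sub_eq (by abel)

theorem mul_le_mul_left (hM : IsLIdeal M) (hc : 0 ≤[M] c) (h : x ≤[M] y) :
    c * x ≤[M] c * y := by
  obtain ⟨m₀, hm₀, hcm₀⟩ := hc
  obtain ⟨m, hm, hxy⟩ := h
  have hc' : 0 ≤ c + m₀ := by rw [zero_sub] at hcm₀; exact neg_le_iff_add_nonneg'.1 hcm₀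
  refine ⟨(c + m₀) * m + -(m₀ * (x - y)),
    hM.add_mem (hM.mul_mem_left _ hm) (hM.neg_mem (hM.mul_mem_right _ hm₀)), ?_⟩
  calc c * x - c * y = (c + m₀) * (x - y) + -(m₀ * (x - y)) := by noncomm_ring
    _ ≤ (c + m₀) * m + -(m₀ * (x - y)) := by gcongr

theorem mul_le_mul_right (hM : IsLIdeal M) (hc : 0 ≤[M] c) (h : x ≤[M] y) :
    x * c ≤[M] y * c := by
  obtain ⟨m₀, hm₀, hcm₀⟩ := hc
  obtain ⟨m, hm, hxy⟩ := h
  have hc' : 0 ≤ c + m₀ := by rw [zero_sub] at hcm₀; exact neg_le_iff_add_nonneg'.1 hcm₀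
  refine ⟨m * (c + m₀) + -((x - y) * m₀),
    hM.add_mem (hM.mul_mem_right _ hm) (hM.neg_mem (hM.mul_mem_left _ hm₀)), ?_⟩
  calc x * c - y * c = (x - y) * (c + m₀) + -((x - y) * m₀) := by noncomm_ring
    _ ≤ m * (c + m₀) + -((x - y) * m₀) := by gcongr

theorem mul_nonneg (hM : IsLIdeal M) (ha : 0 ≤[M] a) (hb : 0 ≤[M] b) : 0 ≤[M] a * b := by
  simpa using mul_le_mul_left hM ha hb

theorem mul_self_le_mul_self (hM : IsLIdeal M) (ha : 0 ≤[M] a) (hab : a ≤[M] b) :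
    a * a ≤[M] b * b :=
  (mul_le_mul_left hM ha hab).trans hM (mul_le_mul_right hM (ha.trans hM hab) hab)

theorem total (hM : IsPrimeLIdeal M) (x y : E) : x ≤[M] y ∨ y ≤[M] x := by
  rcases hM.mem_or_mem (posPart_inf_negPart_eq_zero (x - y)) with h | h
  · exact Or.inl ⟨_, h, le_posPart _⟩
  · exact Or.inr ⟨_, h, by rw [← neg_sub]; exact neg_le_negPart _⟩

theorem abs_le_or (hM : IsPrimeLIdeal M) (x : E) : |x| ≤[M] -x ∨ |x| ≤[M] x := by
  rcases hM.mem_or_mem (posPart_inf_negPart_eq_zero x) with h | h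
  · refine Or.inl ⟨x⁺ + x⁺, hM.add_mem h h, le_of_eq ?_⟩
    calc |x| - -x = (x⁺ + x⁻) + (x⁺ - x⁻) := by
          rw [posPart_add_negPart, posPart_sub_negPart, sub_neg_eq_add]
      _ = x⁺ + x⁺ := by abel
  · refine Or.inr ⟨x⁻ + x⁻, hM.add_mem h h, le_of_eq ?_⟩
    calc |x| - x = (x⁺ + x⁻) - (x⁺ - x⁻) := by rw [posPart_add_negPart, posPart_sub_negPart]
      _ = x⁻ + x⁻ := by abel

variable {p q : E}

theorem nsmul_abs_mul_sub_mul_le (hM : IsPrimeLIdeal M) {n : ℕ} (ha : 0 ≤[M] a) (hb : 0 ≤[M] b)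
    (hab : n • a ≤[M] b) : n • |b * a - a * b| ≤[M] b * b := by
  have hI := hM.toIsLIdeal
  have hna : 0 ≤[M] n • a := by simpa using ha.nsmul hI n
  have h₁ : n • (b * a - a * b) ≤[M] b * b := by
    rw [smul_sub, ← mul_smul_comm n b a, ← smul_mul_assoc n a b]
    exact (sub_le_self (mul_nonneg hI hna hb)).trans hI (mul_le_mul_left hI hb hab)
  have h₂ : n • -(b * a - a * b) ≤[M] b * b := by
    rw [neg_sub, smul_sub, ← mul_smul_comm n b a, ← smul_mul_assoc n a b]
    exact (sub_le_self (mul_nonneg hI hb hna)).trans hI (mul_le_mul_right hI hb hab)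
  rcases abs_le_or hM (b * a - a * b) with h | h
  · exact (h.nsmul hI n).trans hI h₂
  · exact (h.nsmul hI n).trans hI h₁

theorem exists_eq_nsmul_add (hM : IsPrimeLIdeal M) (hq : 0 ≤[M] q) (hqp : q ≤[M] p)
    (h : ¬ ∀ n : ℕ, n • q ≤[M] p) :
    ∃ (j : ℕ) (r : E), p = (j + 1) • q + r ∧ 0 ≤[M] r ∧ r ≤[M] q := by
  classical
  have hI := hM.toIsLIdeal
  simp only [not_forall] at h
  obtain ⟨j, hj⟩ : ∃ j, Nat.find h = j + 2 := by
    match hn : Nat.find h with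
    | 0 => exact absurd (by simpa using hq.trans hI hqp) (hn ▸ Nat.find_spec h)
    | 1 => exact absurd (by simpa using hqp) (hn ▸ Nat.find_spec h)
    | j + 2 => exact ⟨j, rfl⟩
  have hle : (j + 1) • q ≤[M] p := not_not.1 (Nat.find_min h (by omega))
  have hge : p ≤[M] (j + 2) • q :=
    (total hM _ _).resolve_left (hj ▸ Nat.find_spec h)
  refine ⟨j, p - (j + 1) • q, by abel, hle.of_sub_eq (by abel), hge.of_sub_eq ?_⟩
  rw [succ_nsmul _ (j + 1)]
  abel

theorem pow_two_nsmul_abs_mul_sub_mul_le (hM : IsPrimeLIdeal M) (K : ℕ) (hq : 0 ≤[M] q)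
    (hqp : q ≤[M] p) : 2 ^ K • |p * q - q * p| ≤[M] p * p := by
  have hI := hM.toIsLIdeal
  induction K generalizing p q with
  | zero =>
    simpa using nsmul_abs_mul_sub_mul_le hM (n := 1) hq (hq.trans hI hqp) (by simpa using hqp)
  | succ K ih =>
    by_cases hq_small : ∀ n : ℕ, n • q ≤[M] p
    · exact nsmul_abs_mul_sub_mul_le hM hq (hq.trans hI hqp) (hq_small _)
    obtain ⟨j, r, hp, hr, hrq⟩ := exists_eq_nsmul_add hM hq hqp hq_small
    have hpq : p * q - q * p = r * q - q * r := by rw [hp, nsmul_add_mul_sub_mul]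
    rw [hpq]
    by_cases hr_small : ∀ n : ℕ, n • r ≤[M] q
    · rw [abs_sub_comm]
      exact (nsmul_abs_mul_sub_mul_le hM hr hq (hr_small _)).trans hI
        (mul_self_le_mul_self hI hq hqp)
    obtain ⟨i, s, hq', hs, hsr⟩ := exists_eq_nsmul_add hM hr hrq hr_small
    have hqr : r * q - q * r = r * s - s * r := by
      rw [← neg_sub, hq', nsmul_add_mul_sub_mul, neg_sub]
    -- `p ≥ q + r ≥ 2 r`: each double step of the Euclidean algorithm halves the remainder
    have h2r : 2 • r ≤[M] p := by
      rw [hp, two_nsmul]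
      refine add hI (hrq.trans hI ?_) (of_le hI le_rfl)
      rw [succ_nsmul']
      exact le_add_self (by simpa using nsmul hI j hq)
    have h2rr : 2 • (r * r) ≤[M] (2 • r) * (2 • r) := by
      have h4rr : (2 • r) * (2 • r) = 2 • (r * r) + 2 • (r * r) := by
        simp only [two_nsmul, add_mul, mul_add]
      rw [h4rr]
      exact le_add_self (by simpa using nsmul hI 2 (mul_nonneg hI hr hr))
    rw [hqr, pow_succ, mul_nsmul]
    exact (nsmul hI 2 (ih hs hsr)).trans hI
      (h2rr.trans hI (mul_self_le_mul_self hI (by simpa using nsmul hI 2 hr) h2r))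

end LeMod

theorem le_of_forall_leMod {x y : E} (h : ∀ M, IsPrimeLIdeal M → x ≤[M] y) : x ≤ y := by
  by_contra hxy
  obtain ⟨M, hM, hxyM⟩ := exists_isPrimeLIdeal_notMem (w := (x - y)⁺) (by simpa using hxy)
  obtain ⟨m, hm, hxym⟩ := h M hM
  refine hxyM (hM.mem_of_abs_le ?_ hm)
  rw [abs_of_nonneg (posPart_nonneg _)]
  exact (posPart_mono hxym).trans (sup_le (le_abs_self m) (abs_nonneg m))

theorem mul_comm_of_nonneg {a b : E} (ha : 0 ≤ a) (hb : 0 ≤ b) : a * b = b * a := by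
  have hbound : ∀ K : ℕ, 2 ^ K • |a * b - b * a| ≤ a * a + b * b := fun K =>
    le_of_forall_leMod fun M hM => by
      have hI := hM.toIsLIdeal
      rcases LeMod.total hM a b with hab | hba
      · rw [abs_sub_comm]
        exact (LeMod.pow_two_nsmul_abs_mul_sub_mul_le hM K (.of_le hI ha) hab).trans hI
          (.of_le hI (le_add_of_nonneg_left (mul_nonneg ha ha)))
      · exact (LeMod.pow_two_nsmul_abs_mul_sub_mul_le hM K (.of_le hI hb) hba).trans hI
          (.of_le hI (le_add_of_nonneg_right (mul_nonneg hb hb)))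
  have hcomm : |a * b - b * a| ≤ 0 :=
    BanachLatticeFAlgebra.archimedean _ _ (abs_nonneg _) fun n =>
      (nsmul_le_nsmul_left (abs_nonneg _) Nat.lt_two_pow_self.le).trans (hbound n)
  exact sub_eq_zero.1 (eq_zero_of_abs_nonpos hcomm)

end LeMod

section MnConvergence

variable {E : Type*} [BanachLatticeFAlgebra E]

theorem abs_mul_sub_mul_le (x y x₀ y₀ : E) :
    |x * y - x₀ * y₀| ≤ |x - x₀| * |y - y₀| + |x - x₀| * |y₀| + |x₀| * |y - y₀| := by
  have h : x * y - x₀ * y₀ = (x - x₀) * (y - y₀) + (x - x₀) * y₀ + x₀ * (y - y₀) := by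
    noncomm_ring
  rw [h]
  refine (abs_add_le _ _).trans (add_le_add ((abs_add_le _ _).trans (add_le_add ?_ ?_)) ?_) <;>
    exact abs_mul_le_abs_mul_abs _ _

theorem norm_abs_mul_sub_mul_mul_le (x y x₀ y₀ : E) {u₁ u₂ : E} (hu₁ : 0 ≤ u₁) (hu₂ : 0 ≤ u₂) :
    ‖|x * y - x₀ * y₀| * (u₁ * u₂)‖ ≤ ‖|x - x₀| * u₁‖ * ‖|y - y₀| * u₂‖
      + ‖|x - x₀| * (|y₀| * (u₁ * u₂))‖ + ‖|x₀|‖ * ‖|y - y₀| * (u₁ * u₂)‖ := by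
  have hu : 0 ≤ u₁ * u₂ := mul_nonneg hu₁ hu₂
  have hle : |x * y - x₀ * y₀| * (u₁ * u₂) ≤ (|x - x₀| * u₁) * (|y - y₀| * u₂)
      + |x - x₀| * (|y₀| * (u₁ * u₂)) + |x₀| * (|y - y₀| * (u₁ * u₂)) := by
    have hcomm : |x - x₀| * |y - y₀| * (u₁ * u₂) = (|x - x₀| * u₁) * (|y - y₀| * u₂) := by
      rw [mul_assoc, ← mul_assoc |y - y₀|, mul_comm_of_nonneg (abs_nonneg _) hu₁]
      simp only [mul_assoc]
    refine (mul_le_mul_of_nonneg_right (abs_mul_sub_mul_le x y x₀ y₀) hu).trans (le_of_eq ?_)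
    rw [add_mul, add_mul, hcomm]
    simp only [mul_assoc]
  exact (norm_le_norm_of_nonneg_of_le (mul_nonneg (abs_nonneg _) hu) hle).trans
    (norm_add₃_le.trans (add_le_add_three (norm_mul_le _ _) le_rfl (norm_mul_le _ _)))

theorem MnTendsto.comp {ι κ : Type*} {l : Filter ι} {x : ι → E} {x₀ : E}
    (hx : MnTendsto l x x₀) {l' : Filter κ} {f : κ → ι} (hf : Tendsto f l' l) :
    MnTendsto l' (x ∘ f) x₀ :=
  fun u hu => (hx u hu).comp hf

theorem MnTendsto.mul (hfac : ∀ u : E, 0 ≤ u → ∃ u₁ u₂ : E, 0 ≤ u₁ ∧ 0 ≤ u₂ ∧ u = u₁ * u₂)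
    {ι : Type*} {l : Filter ι} {x y : ι → E} {x₀ y₀ : E}
    (hx : MnTendsto l x x₀) (hy : MnTendsto l y y₀) :
    MnTendsto l (fun i => x i * y i) (x₀ * y₀) := by
  intro u hu
  obtain ⟨u₁, u₂, hu₁, hu₂, rfl⟩ := hfac u hu
  refine squeeze_zero (fun _ => norm_nonneg _)
    (fun i => norm_abs_mul_sub_mul_mul_le (x i) (y i) x₀ y₀ hu₁ hu₂) ?_
  have h := (((hx u₁ hu₁).mul (hy u₂ hu₂)).add (hx _ (mul_nonneg (abs_nonneg y₀) hu))).add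
    ((hy _ hu).const_mul ‖|x₀|‖)
  simp only [mul_zero, add_zero] at h
  exact h

end MnConvergence

variable {E : Type*} [BanachLatticeFAlgebra E] [CompleteSpace E]
variable {A : Type*} [Preorder A] [Nonempty A] [IsDirected A (· ≤ ·)]

variable {B : Type*} [Preorder B] [Nonempty B] [IsDirected B (· ≤ ·)]

/-- If every positive element factors as a product of two positive elements,
then multiplication is jointly mn-continuous. -/
theorem mnTendsto_mul (hfac : ∀ u : E, 0 ≤ u → ∃ u₁ u₂ : E, 0 ≤ u₁ ∧ 0 ≤ u₂ ∧ u = u₁ * u₂)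
    (x : A → E) (y : B → E) (x₀ y₀ : E)
    (hx : MnTendsto atTop x x₀) (hy : MnTendsto atTop y y₀) :
    MnTendsto (atTop : Filter (A × B)) (fun p => x p.1 * y p.2) (x₀ * y₀) :=
  (hx.comp (tendsto_fst.mono_left prod_atTop_atTop_eq.ge)).mul hfac
    (hy.comp (tendsto_snd.mono_left prod_atTop_atTop_eq.ge))
end
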